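/- arXiv:2206.12688 — 9 statements merged into one kernel-verified Lean document; each statement's English description precedes it below -/
import Mathlib

section
/- Let τ ≥ 0 and let S, I, Q, R, B : ℝ → ℝ be continuous functions that are constant and nonnegative on [−τ, 0] (i.e. S(t) = S₀ ≥ 0, I(t) = I₀ ≥ 0, Q(t) = Q₀ ≥ 0, R(t) = R₀ ≥ 0, B(t) = B₀ ≥ 0 for all t ∈ [−τ, 0]), differentiable on (0, ∞), and satisfying for all t > 0 the delayed SIQRB system: S′(t) = Λ − βB(t)S(t)/(κ+B(t)) + ωR(t) − μS(t), I′(t) = βB(t−τ)S(t−τ)/(κ+B(t−τ)) − (δ+α₁+μ)I(t), Q′(t) = δI(t) − (ε+α₂+μ)Q(t), R′(t) = εQ(t) − (ω+μ)R(t), B′(t) = ηI(t) − dB(t). Then S(t) ≥ 0, I(t) ≥ 0, Q(t) ≥ 0, R(t) ≥ 0 and B(t) ≥ 0 for all t ≥ −τ. -/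
/-!
Replace the lower bound `0` by the barrier `-p e^{Kt}` with `p > 0` small. At the first time a
component touches the barrier, every component has stayed above `-c`, `c = p e^{Kt} ≤ κ/2`, on
the whole history `[-τ, t]`; this keeps `κ + B` away from `0`, and since every term of the
touching component's equation except its own decay is bounded below by a multiple of `-c`, a
large enough `K` makes its derivative exceed that of the barrier, which is impossible at a
first touch. Letting `p → 0` gives nonnegativity.
-/

open Set

theorem IsMinOn.hasDerivAt_nonpos_of_Icc_right {f : ℝ → ℝ} {f' a t : ℝ}
    (hmin : IsMinOn f (Icc a t) t) (hf : HasDerivAt f f' t) (hat : a < t) : f' ≤ 0 := by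
  have hcone : a - t ∈ posTangentConeAt (Icc a t) t :=
    sub_mem_posTangentConeAt_of_segment_subset
      ((segment_symm ℝ t a).trans_subset (segment_subset_Icc hat.le))
  have h := hmin.localize.hasFDerivWithinAt_nonneg hf.hasFDerivAt.hasFDerivWithinAt hcone
  simp only [ContinuousLinearMap.toSpanSingleton_apply, smul_eq_mul] at h
  nlinarith

theorem boundary_lt_of_deriv_boundary_lt_deriv {ι : Type*} [Finite ι] {X : ι → ℝ → ℝ}
    {b b' : ℝ → ℝ} {a T : ℝ}
    (hX : ∀ i, ContinuousOn (X i) (Icc a T)) (hb : ContinuousOn b (Icc a T))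
    (hb' : ∀ t ∈ Ioc a T, HasDerivAt b (b' t) t) (ha : ∀ i, b a < X i a)
    (htouch : ∀ t ∈ Ioc a T, (∀ u ∈ Icc a t, ∀ j, b u ≤ X j u) → ∀ i, X i t = b t →
      ∃ x', HasDerivAt (X i) x' t ∧ b' t < x') :
    ∀ t ∈ Icc a T, ∀ i, b t < X i t := by
  by_contra! hbad
  set bad := ⋃ i, {u ∈ Icc a T | X i u ≤ b u}
  have hclosed : IsClosed bad :=
    isClosed_iUnion_of_finite fun i => isClosed_Icc.isClosed_le (hX i) hb
  have hne : bad.Nonempty := by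
    obtain ⟨t, ht, i, hi⟩ := hbad
    exact ⟨t, mem_iUnion.2 ⟨i, ht, hi⟩⟩
  have hbdd : BddBelow bad := ⟨a, fun u hu => (mem_iUnion.1 hu).choose_spec.1.1⟩
  set t₁ := sInf bad
  obtain ⟨i, ⟨hat₁, ht₁T⟩, hi⟩ := mem_iUnion.1 (hclosed.csInf_mem hne hbdd)
  have hbefore : ∀ u ∈ Ico a t₁, ∀ j, b u < X j u := fun u hu j => not_le.1 fun h =>
    (csInf_le hbdd (mem_iUnion.2 ⟨j, ⟨hu.1, hu.2.le.trans ht₁T⟩, h⟩)).not_gt hu.2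
  have hat : a < t₁ := hat₁.lt_of_ne fun h => (ha i).not_ge (h ▸ hi)
  have hlow_t₁ : ∀ j, b t₁ ≤ X j t₁ := by
    intro j
    have hsub : Ico a t₁ ⊆ Icc a T := Ico_subset_Icc_self.trans (Icc_subset_Icc_right ht₁T)
    refine ContinuousWithinAt.closure_le ?_ ((hb t₁ ⟨hat₁, ht₁T⟩).mono hsub)
      ((hX j t₁ ⟨hat₁, ht₁T⟩).mono hsub) fun v hv => (hbefore v hv j).le
    rw [closure_Ico hat.ne]
    exact right_mem_Icc.2 hat.le
  have hlow : ∀ u ∈ Icc a t₁, ∀ j, b u ≤ X j u := fun u hu j =>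
    hu.2.lt_or_eq.elim (fun hlt => (hbefore u ⟨hu.1, hlt⟩ j).le) fun h => h ▸ hlow_t₁ j
  have htouch_t₁ : X i t₁ = b t₁ := le_antisymm hi (hlow_t₁ i)
  obtain ⟨x', hx', hlt⟩ := htouch t₁ ⟨hat, ht₁T⟩ hlow i htouch_t₁
  have hmin : IsMinOn (fun u => X i u - b u) (Icc a t₁) t₁ := fun u hu => by
    simp only [mem_ofPred_eq, htouch_t₁, sub_self, sub_nonneg]
    exact hlow u hu i
  linarith [hmin.hasDerivAt_nonpos_of_Icc_right (hx'.sub (hb' t₁ ⟨hat, ht₁T⟩)) hat]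

theorem neg_two_mul_div_le_div_add {κ c b : ℝ} (hκ : 0 < κ) (hc : 0 ≤ c) (hcκ : c ≤ κ / 2)
    (hb : -c ≤ b) : -(2 * c / κ) ≤ b / (κ + b) := by
  rw [le_div_iff₀ (by linarith), neg_mul, div_mul_eq_mul_div, neg_le, le_div_iff₀ hκ]
  nlinarith

theorem neg_add_mul_le_mul {s g c e M : ℝ} (hc : 0 ≤ c) (he : 0 ≤ e) (hM : 0 ≤ M)
    (hcs : -c ≤ s) (hsM : s ≤ M) (heg : -e ≤ g) (hg : g ≤ 1) : -(c + M * e) ≤ s * g := by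
  rcases le_total 0 s with hs | hs
  · nlinarith [mul_le_mul_of_nonneg_left heg hs, mul_le_mul_of_nonneg_right hsM he]
  · nlinarith [mul_le_mul_of_nonpos_left hg hs, mul_nonneg hM he]

/-- The right-hand side of the SIQRB system at the state `x = (S, I, Q, R, B)`, with `xd` the
state at the delayed time `t - τ`. -/
noncomputable def siqrbField (Λ μ β κ η d ω δ ε α₁ α₂ : ℝ) (x xd : Fin 5 → ℝ) : Fin 5 → ℝ :=
  ![Λ - β * x 4 * x 0 / (κ + x 4) + ω * x 3 - μ * x 0,
    β * xd 4 * xd 0 / (κ + xd 4) - (δ + α₁ + μ) * x 1,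
    δ * x 1 - (ε + α₂ + μ) * x 2,
    ε * x 2 - (ω + μ) * x 3,
    η * x 1 - d * x 4]

theorem neg_mul_lt_siqrbField {Λ μ β κ η d ω δ ε α₁ α₂ : ℝ}
    (hΛ : 0 ≤ Λ) (hμ : 0 ≤ μ) (hβ : 0 ≤ β) (hκ : 0 < κ) (hη : 0 ≤ η) (hd : 0 ≤ d)
    (hω : 0 ≤ ω) (hδ : 0 ≤ δ) (hε : 0 ≤ ε) (hα₁ : 0 ≤ α₁) (hα₂ : 0 ≤ α₂)
    {x xd : Fin 5 → ℝ} {c M K : ℝ} (hc : 0 < c) (hcκ : c ≤ κ / 2) (hM : 0 ≤ M)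
    (hK : β * (1 + 2 * M / κ) + ω + δ + ε + η < K)
    (hx : ∀ j, -c ≤ x j) (hxd : ∀ j, -c ≤ xd j) (hxdM : xd 0 ≤ M) (i : Fin 5) (hi : x i = -c) :
    -(K * c) < siqrbField Λ μ β κ η d ω δ ε α₁ α₂ x xd i := by
  have hKc : (β * (1 + 2 * M / κ) + ω + δ + ε + η) * c < K * c :=
    mul_lt_mul_of_pos_right hK hc
  have hβM : 0 ≤ β * (2 * M / κ) * c := by positivity
  have hωc : 0 ≤ ω * c := mul_nonneg hω hc.le
  have hδc : 0 ≤ δ * c := mul_nonneg hδ hc.le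
  have hεc : 0 ≤ ε * c := mul_nonneg hε hc.le
  have hηc : 0 ≤ η * c := mul_nonneg hη hc.le
  fin_cases i <;> simp only [siqrbField, Fin.isValue, Fin.zero_eta, Fin.mk_one, Fin.reduceFinMk,
    Matrix.cons_val_zero, Matrix.cons_val_one, Matrix.cons_val] at hi ⊢
  · have hg : -1 ≤ x 4 / (κ + x 4) := (neg_two_mul_div_le_div_add hκ hc.le hcκ (hx 4)).trans'
      (neg_le_neg ((div_le_one hκ).2 (by linarith)))
    have hinc : -(β * c) ≤ -(β * x 4 * x 0 / (κ + x 4)) :=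
      calc -(β * c) = β * c * -1 := by ring
        _ ≤ β * c * (x 4 / (κ + x 4)) := mul_le_mul_of_nonneg_left hg (by positivity)
        _ = _ := by rw [hi]; ring
    nlinarith [mul_le_mul_of_nonneg_left (hx 3) hω]
  · have hsg := neg_add_mul_le_mul hc.le (by positivity) hM (hxd 0) hxdM
      (neg_two_mul_div_le_div_add hκ hc.le hcκ (hxd 4))
      (div_le_one_of_le₀ (by linarith) (by linarith [hxd 4]))
    have hinc : -(β * (1 + 2 * M / κ) * c) ≤ β * xd 4 * xd 0 / (κ + xd 4) :=
      calc -(β * (1 + 2 * M / κ) * c) = β * -(c + M * (2 * c / κ)) := by ring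
        _ ≤ β * (xd 0 * (xd 4 / (κ + xd 4))) := mul_le_mul_of_nonneg_left hsg hβ
        _ = _ := by ring
    nlinarith [mul_nonneg (add_nonneg (add_nonneg hδ hα₁) hμ) hc.le]
  · nlinarith [mul_le_mul_of_nonneg_left (hx 1) hδ]
  · nlinarith [mul_le_mul_of_nonneg_left (hx 2) hε]
  · nlinarith [mul_le_mul_of_nonneg_left (hx 1) hη]

theorem neg_exp_le_of_barrier {ι : Type*} {X : ι → ℝ → ℝ} {τ p K t : ℝ} (hp : 0 ≤ p)
    (hK : 0 ≤ K) (hinit : ∀ j, ∀ u ∈ Icc (-τ) 0, 0 ≤ X j u)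
    (hlow : ∀ u ∈ Icc 0 t, ∀ j, -(p * Real.exp (K * u)) ≤ X j u) :
    ∀ u ∈ Icc (-τ) t, ∀ j, -(p * Real.exp (K * t)) ≤ X j u := by
  intro u hu j
  rcases le_or_gt u 0 with hu0 | hu0
  · linarith [hinit j u ⟨hu.1, hu0⟩, mul_nonneg hp (Real.exp_pos (K * t)).le]
  · refine (hlow u ⟨hu0.le, hu.2⟩ j).trans' (neg_le_neg ?_)
    gcongr
    exact hu.2

theorem nonneg_of_hasDerivAt_siqrbField {Λ μ β κ η d ω δ ε α₁ α₂ τ : ℝ}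
    (hΛ : 0 ≤ Λ) (hμ : 0 ≤ μ) (hβ : 0 ≤ β) (hκ : 0 < κ) (hη : 0 ≤ η) (hd : 0 ≤ d)
    (hω : 0 ≤ ω) (hδ : 0 ≤ δ) (hε : 0 ≤ ε) (hα₁ : 0 ≤ α₁) (hα₂ : 0 ≤ α₂) (hτ : 0 ≤ τ)
    {X : Fin 5 → ℝ → ℝ} (hX : ∀ j, Continuous (X j)) (hinit : ∀ j, ∀ u ∈ Icc (-τ) 0, 0 ≤ X j u)
    (hX' : ∀ t > 0, ∀ i, HasDerivAt (X i)
      (siqrbField Λ μ β κ η d ω δ ε α₁ α₂ (X · t) (X · (t - τ)) i) t) :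
    ∀ T, -τ ≤ T → ∀ j, 0 ≤ X j T := by
  intro T hT j
  rcases le_or_gt T 0 with hT0 | hT0
  · exact hinit j T ⟨hT, hT0⟩
  obtain ⟨M, hM⟩ := (isCompact_Icc (a := -τ) (b := T)).bddAbove_image (hX 0).continuousOn
  have hM0 : 0 ≤ M :=
    (hinit 0 0 ⟨by linarith, le_rfl⟩).trans (hM ⟨0, ⟨by linarith, hT0.le⟩, rfl⟩)
  set K := β * (1 + 2 * M / κ) + ω + δ + ε + η + 1
  have hK : 0 ≤ K := by positivity
  refine le_of_forall_pos_lt_add fun q hq => ?_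
  set p := min q (κ / 2) * Real.exp (-(K * T))
  have hp : 0 < p := by positivity
  have hpT : p * Real.exp (K * T) = min q (κ / 2) := by
    rw [mul_assoc, ← Real.exp_add, neg_add_cancel, Real.exp_zero, mul_one]
  suffices hbarrier : -(p * Real.exp (K * T)) < X j T by linarith [min_le_left q (κ / 2)]
  refine boundary_lt_of_deriv_boundary_lt_deriv (a := 0) (b := fun u => -(p * Real.exp (K * u)))
    (b' := fun u => -(p * (Real.exp (K * u) * K))) (fun i => (hX i).continuousOn) (by fun_prop)
    (fun t _ => ((((hasDerivAt_id t).const_mul K).exp.const_mul p).fun_neg).congr_deriv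
      (by simp)) (fun i => ?_) ?_ T ⟨hT0.le, le_rfl⟩ j
  · simp only [mul_zero, Real.exp_zero, mul_one]
    linarith [hinit i 0 ⟨by linarith, le_rfl⟩]
  intro t ht hlow i hi
  have hhist := neg_exp_le_of_barrier hp.le hK hinit hlow
  have hc : p * Real.exp (K * t) ≤ κ / 2 :=
    calc p * Real.exp (K * t) ≤ p * Real.exp (K * T) := by gcongr; exact ht.2
      _ ≤ κ / 2 := hpT ▸ min_le_right _ _
  refine ⟨_, hX' t ht.1 i, ?_⟩
  have := neg_mul_lt_siqrbField hΛ hμ hβ hκ hη hd hω hδ hε hα₁ hα₂ (by positivity) hc hM0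
    (lt_add_one _) (hhist t ⟨by linarith [ht.1], le_rfl⟩)
    (hhist (t - τ) ⟨by linarith [ht.1], by linarith⟩)
    (hM ⟨t - τ, ⟨by linarith [ht.1], by linarith [ht.2]⟩, rfl⟩) i hi
  linarith

/-- Non-negativity of solutions of the delayed SIQRB cholera model:
if the five state functions are continuous, constant and nonnegative on `[-τ, 0]`,
and satisfy the delayed SIQRB system for all `t > 0`, then they stay nonnegative
for all `t ≥ -τ`. -/
theorem siqrb_delayed_nonneg
    (Λ μ β κ η d ω δ ε α₁ α₂ τ : ℝ)
    (hΛ : 0 < Λ) (hμ : 0 < μ) (hβ : 0 < β) (hκ : 0 < κ) (hη : 0 < η) (hd : 0 < d)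
    (hω : 0 ≤ ω) (hδ : 0 ≤ δ) (hε : 0 ≤ ε) (hα₁ : 0 ≤ α₁) (hα₂ : 0 ≤ α₂) (hτ : 0 ≤ τ)
    (S I Q R B : ℝ → ℝ) (S₀ I₀ Q₀ R₀ B₀ : ℝ)
    (hScont : Continuous S) (hIcont : Continuous I) (hQcont : Continuous Q)
    (hRcont : Continuous R) (hBcont : Continuous B)
    (hS₀ : 0 ≤ S₀) (hI₀ : 0 ≤ I₀) (hQ₀ : 0 ≤ Q₀) (hR₀ : 0 ≤ R₀) (hB₀ : 0 ≤ B₀)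
    (hSic : ∀ t ∈ Set.Icc (-τ) (0 : ℝ), S t = S₀)
    (hIic : ∀ t ∈ Set.Icc (-τ) (0 : ℝ), I t = I₀)
    (hQic : ∀ t ∈ Set.Icc (-τ) (0 : ℝ), Q t = Q₀)
    (hRic : ∀ t ∈ Set.Icc (-τ) (0 : ℝ), R t = R₀)
    (hBic : ∀ t ∈ Set.Icc (-τ) (0 : ℝ), B t = B₀)
    (hS' : ∀ t > (0 : ℝ),
      HasDerivAt S (Λ - β * B t * S t / (κ + B t) + ω * R t - μ * S t) t)
    (hI' : ∀ t > (0 : ℝ),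
      HasDerivAt I (β * B (t - τ) * S (t - τ) / (κ + B (t - τ)) - (δ + α₁ + μ) * I t) t)
    (hQ' : ∀ t > (0 : ℝ), HasDerivAt Q (δ * I t - (ε + α₂ + μ) * Q t) t)
    (hR' : ∀ t > (0 : ℝ), HasDerivAt R (ε * Q t - (ω + μ) * R t) t)
    (hB' : ∀ t > (0 : ℝ), HasDerivAt B (η * I t - d * B t) t) :
    ∀ t, -τ ≤ t → 0 ≤ S t ∧ 0 ≤ I t ∧ 0 ≤ Q t ∧ 0 ≤ R t ∧ 0 ≤ B t := by
  
  have hX := nonneg_of_hasDerivAt_siqrbField hΛ.le hμ.le hβ.le hκ hη.le hd.le hω hδ hε hα₁ hα₂ hτ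
    (X := ![S, I, Q, R, B])
    (fun j => by fin_cases j; exacts [hScont, hIcont, hQcont, hRcont, hBcont])
    (fun j u hu => by
      fin_cases j
      exacts [hS₀.trans_eq (hSic u hu).symm, hI₀.trans_eq (hIic u hu).symm,
        hQ₀.trans_eq (hQic u hu).symm, hR₀.trans_eq (hRic u hu).symm,
        hB₀.trans_eq (hBic u hu).symm])
    (fun t ht i => by
      fin_cases i
      exacts [hS' t ht, hI' t ht, hQ' t ht, hR' t ht, hB' t ht])
  exact fun t ht => ⟨hX t ht 0, hX t ht 1, hX t ht 2, hX t ht 3, hX t ht 4⟩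
end

section
/- If R₀ > 1, then the point (S*, I*, Q*, R*, B*) with S* = a₁ρ/(ηD̄), I* = βΛa₂a₃(R₀−1)/(R₀D̄), Q* = βΛa₃δ(R₀−1)/(R₀D̄), R* = βΛδε(R₀−1)/(R₀D̄), B* = βΛηa₂a₃(R₀−1)/(R₀D̄d) satisfies the equilibrium equations of the SIQRB model: Λ − βB*S*/(κ+B*) + ωR* − μS* = 0, βB*S*/(κ+B*) − a₁I* = 0, δI* − a₂Q* = 0, εQ* − a₃R* = 0, and ηI* − dB* = 0. -/
/-!
Clearing `(R₀ - 1) / R₀ = (βΛη - μκd a₁) / (βΛη)` writes the endemic point as `I* = a₂a₃N/(ηD̄)`,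
`R* = δεN/(ηD̄)`, `B* = a₂a₃N/(dD̄)` with `N = βΛη - μκd a₁`, after which the three linear
equations are immediate. The incidence term simplifies through `κ + B* = βρ/(dD̄)`, giving
`βB*S*/(κ + B*) = a₁I*`; the first equation then reduces to the linear balance
`Λ + ωR* - μS* - a₁I* = 0`. Every denominator is positive because `a₁a₂a₃ - δεω > 0`,
each of `a₁, a₂, a₃` strictly dominating `δ, ε, ω`.
-/

theorem mul_mul_sub_mul_mul_pos {x y z a b c : ℝ} (hx : 0 ≤ x) (hxa : x < a) (hy : 0 ≤ y)
    (hyb : y < b) (hz : 0 ≤ z) (hzc : z < c) : 0 < a * b * c - x * y * z :=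
  sub_pos.2 (mul_lt_mul'' (mul_lt_mul'' hxa hyb hx hy) hzc (mul_nonneg hx hy) hz)

section SIQRB

variable {Λ μ β κ η d ω δ ε a₁ a₂ a₃ ρ D : ℝ}

theorem siqrb_kappa_add_bacteria_eq (hd : d ≠ 0) (hD₀ : D ≠ 0)
    (hρ : ρ = Λ * η * a₂ * a₃ + κ * d * (a₁ * a₂ * a₃ - δ * ε * ω))
    (hD : D = a₁ * a₂ * a₃ * μ + β * (a₁ * a₂ * a₃ - δ * ε * ω)) :
    κ + a₂ * a₃ * (β * Λ * η - μ * κ * d * a₁) / (d * D) = β * ρ / (d * D) := by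
  field_simp
  rw [hρ, hD]
  ring

theorem siqrb_force_eq (hη : η ≠ 0) (hd : d ≠ 0) (hD₀ : D ≠ 0)
    (hρ : ρ = Λ * η * a₂ * a₃ + κ * d * (a₁ * a₂ * a₃ - δ * ε * ω))
    (hD : D = a₁ * a₂ * a₃ * μ + β * (a₁ * a₂ * a₃ - δ * ε * ω)) :
    β * (a₂ * a₃ * (β * Λ * η - μ * κ * d * a₁) / (d * D)) * (a₁ * ρ / (η * D)) =
      a₁ * (a₂ * a₃ * (β * Λ * η - μ * κ * d * a₁) / (η * D)) *
        (κ + a₂ * a₃ * (β * Λ * η - μ * κ * d * a₁) / (d * D)) := by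
  rw [siqrb_kappa_add_bacteria_eq hd hD₀ hρ hD]
  field_simp

theorem siqrb_balance_eq (hη : η ≠ 0) (hD₀ : D ≠ 0)
    (hρ : ρ = Λ * η * a₂ * a₃ + κ * d * (a₁ * a₂ * a₃ - δ * ε * ω))
    (hD : D = a₁ * a₂ * a₃ * μ + β * (a₁ * a₂ * a₃ - δ * ε * ω)) :
    Λ + ω * (δ * ε * (β * Λ * η - μ * κ * d * a₁) / (η * D)) - μ * (a₁ * ρ / (η * D)) -
      a₁ * (a₂ * a₃ * (β * Λ * η - μ * κ * d * a₁) / (η * D)) = 0 := by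
  field_simp
  rw [hρ, hD]
  ring

end SIQRB

theorem siqrb_endemic_is_equilibrium_general
    (Λ μ β κ η d ω δ ε α₁ α₂ : ℝ)
    (hΛ : 0 < Λ) (hμ : 0 < μ) (hβ : 0 < β) (hκ : 0 < κ) (hη : 0 < η) (hd : 0 < d)
    (hω : 0 ≤ ω) (hδ : 0 ≤ δ) (hε : 0 ≤ ε) (hα₁ : 0 ≤ α₁) (hα₂ : 0 ≤ α₂)
    (a₁ a₂ a₃ ρ D R₀ Sstar Istar Qstar Rstar Bstar : ℝ)
    (ha₁ : a₁ = δ + α₁ + μ) (ha₂ : a₂ = ε + α₂ + μ) (ha₃ : a₃ = ω + μ)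
    (hρ : ρ = Λ * η * a₂ * a₃ + κ * d * (a₁ * a₂ * a₃ - δ * ε * ω))
    (hD : D = a₁ * a₂ * a₃ * μ + β * (a₁ * a₂ * a₃ - δ * ε * ω))
    (hR₀ : R₀ = β * Λ * η / (μ * κ * d * a₁))
    (hS : Sstar = a₁ * ρ / (η * D))
    (hI : Istar = β * Λ * a₂ * a₃ * (R₀ - 1) / (R₀ * D))
    (hQ : Qstar = β * Λ * a₃ * δ * (R₀ - 1) / (R₀ * D))
    (hR : Rstar = β * Λ * δ * ε * (R₀ - 1) / (R₀ * D))
    (hB : Bstar = β * Λ * η * a₂ * a₃ * (R₀ - 1) / (R₀ * D * d)) :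
    Λ - β * Bstar * Sstar / (κ + Bstar) + ω * Rstar - μ * Sstar = 0 ∧
      β * Bstar * Sstar / (κ + Bstar) - a₁ * Istar = 0 ∧
      δ * Istar - a₂ * Qstar = 0 ∧
      ε * Qstar - a₃ * Rstar = 0 ∧
      η * Istar - d * Bstar = 0 := by
  have ha₁₀ : 0 < a₁ := by linarith
  have ha₂₀ : 0 < a₂ := by linarith
  have ha₃₀ : 0 < a₃ := by linarith
  have hK : 0 < a₁ * a₂ * a₃ - δ * ε * ω :=
    mul_mul_sub_mul_mul_pos hδ (by linarith) hε (by linarith) hω (by linarith)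
  have hD₀ : 0 < D := by rw [hD]; positivity
  have hρ₀ : 0 < ρ := by rw [hρ]; positivity
  set N := β * Λ * η - μ * κ * d * a₁
  have hI' : Istar = a₂ * a₃ * N / (η * D) := by rw [hI, hR₀]; field_simp; ring
  have hR' : Rstar = δ * ε * N / (η * D) := by rw [hR, hR₀]; field_simp; ring
  have hB' : Bstar = a₂ * a₃ * N / (d * D) := by rw [hB, hR₀]; field_simp; ring
  have hforce : β * Bstar * Sstar / (κ + Bstar) = a₁ * Istar := by
    have hκB : κ + Bstar ≠ 0 := by
      rw [hB', siqrb_kappa_add_bacteria_eq hd.ne' hD₀.ne' hρ hD]; positivity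
    rw [div_eq_iff hκB, hB', hS, hI']
    exact siqrb_force_eq hη.ne' hd.ne' hD₀.ne' hρ hD
  have hbalance := siqrb_balance_eq (ω := ω) hη.ne' hD₀.ne' hρ hD
  refine ⟨?_, by rw [hforce, sub_self], ?_, ?_, ?_⟩
  · rw [hforce, hR', hS, hI']; linarith
  · rw [hI, hQ]; field_simp; ring
  · rw [hQ, hR]; field_simp; ring
  · rw [hI, hB]; field_simp; ring

/-- If `R₀ > 1`, the endemic point `(S*, I*, Q*, R*, B*)` satisfies the equilibrium
equations of the SIQRB model. -/
theorem siqrb_endemic_is_equilibrium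
    (Λ μ β κ η d ω δ ε α₁ α₂ : ℝ)
    (hΛ : 0 < Λ) (hμ : 0 < μ) (hβ : 0 < β) (hκ : 0 < κ) (hη : 0 < η) (hd : 0 < d)
    (hω : 0 ≤ ω) (hδ : 0 ≤ δ) (hε : 0 ≤ ε) (hα₁ : 0 ≤ α₁) (hα₂ : 0 ≤ α₂)
    (a₁ a₂ a₃ ρ D R₀ Sstar Istar Qstar Rstar Bstar : ℝ)
    (ha₁ : a₁ = δ + α₁ + μ) (ha₂ : a₂ = ε + α₂ + μ) (ha₃ : a₃ = ω + μ)
    (hρ : ρ = Λ * η * a₂ * a₃ + κ * d * (a₁ * a₂ * a₃ - δ * ε * ω))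
    (hD : D = a₁ * a₂ * a₃ * μ + β * (a₁ * a₂ * a₃ - δ * ε * ω))
    (hR₀ : R₀ = β * Λ * η / (μ * κ * d * a₁))
    (hR₀gt : 1 < R₀)
    (hS : Sstar = a₁ * ρ / (η * D))
    (hI : Istar = β * Λ * a₂ * a₃ * (R₀ - 1) / (R₀ * D))
    (hQ : Qstar = β * Λ * a₃ * δ * (R₀ - 1) / (R₀ * D))
    (hR : Rstar = β * Λ * δ * ε * (R₀ - 1) / (R₀ * D))
    (hB : Bstar = β * Λ * η * a₂ * a₃ * (R₀ - 1) / (R₀ * D * d)) :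
    Λ - β * Bstar * Sstar / (κ + Bstar) + ω * Rstar - μ * Sstar = 0 ∧
      β * Bstar * Sstar / (κ + Bstar) - a₁ * Istar = 0 ∧
      δ * Istar - a₂ * Qstar = 0 ∧
      ε * Qstar - a₃ * Rstar = 0 ∧
      η * Istar - d * Bstar = 0 :=
  siqrb_endemic_is_equilibrium_general Λ μ β κ η d ω δ ε α₁ α₂ hΛ hμ hβ hκ hη hd hω hδ hε hα₁ hα₂ a₁
    a₂ a₃ ρ D R₀ Sstar Istar Qstar Rstar Bstar ha₁ ha₂ ha₃ hρ hD hR₀ hS hI hQ hR hB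
end

section
/- If R₀ > 1, then the endemic equilibrium components satisfy S* > 0, I* > 0 and B* > 0, and Q* ≥ 0 and R* ≥ 0; moreover Q* > 0 whenever δ > 0, and R* > 0 whenever δ > 0 and ε > 0. -/
/-- If `R₀ > 1`, then `S* > 0`, `I* > 0`, `B* > 0`, `Q* ≥ 0`, `R* ≥ 0`;
moreover `Q* > 0` whenever `δ > 0`, and `R* > 0` whenever `δ > 0` and `ε > 0`. -/
theorem siqrb_endemic_positivity
    (Λ μ β κ η d ω δ ε α₁ α₂ : ℝ)
    (hΛ : 0 < Λ) (hμ : 0 < μ) (hβ : 0 < β) (hκ : 0 < κ) (hη : 0 < η) (hd : 0 < d)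
    (hω : 0 ≤ ω) (hδ : 0 ≤ δ) (hε : 0 ≤ ε) (hα₁ : 0 ≤ α₁) (hα₂ : 0 ≤ α₂)
    (a₁ a₂ a₃ ρ D R₀ Sstar Istar Qstar Rstar Bstar : ℝ)
    (ha₁ : a₁ = δ + α₁ + μ) (ha₂ : a₂ = ε + α₂ + μ) (ha₃ : a₃ = ω + μ)
    (hρ : ρ = Λ * η * a₂ * a₃ + κ * d * (a₁ * a₂ * a₃ - δ * ε * ω))
    (hD : D = a₁ * a₂ * a₃ * μ + β * (a₁ * a₂ * a₃ - δ * ε * ω))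
    (hR₀ : R₀ = β * Λ * η / (μ * κ * d * a₁))
    (hR₀gt : 1 < R₀)
    (hS : Sstar = a₁ * ρ / (η * D))
    (hI : Istar = β * Λ * a₂ * a₃ * (R₀ - 1) / (R₀ * D))
    (hQ : Qstar = β * Λ * a₃ * δ * (R₀ - 1) / (R₀ * D))
    (hR : Rstar = β * Λ * δ * ε * (R₀ - 1) / (R₀ * D))
    (hB : Bstar = β * Λ * η * a₂ * a₃ * (R₀ - 1) / (R₀ * D * d)) :
    0 < Sstar ∧ 0 < Istar ∧ 0 < Bstar ∧ 0 ≤ Qstar ∧ 0 ≤ Rstar ∧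
      (0 < δ → 0 < Qstar) ∧ (0 < δ → 0 < ε → 0 < Rstar) := by
  have h1 : 0 < a₁ := by rw [ha₁]; positivity
  have h2 : 0 < a₂ := by rw [ha₂]; positivity
  have h3 : 0 < a₃ := by rw [ha₃]; positivity
  have hδa : δ < a₁ := by rw [ha₁]; linarith
  have hεa : ε < a₂ := by rw [ha₂]; linarith
  have hωa : ω < a₃ := by rw [ha₃]; linarith
  have hgap : δ * ε * ω < a₁ * a₂ * a₃ :=
    calc δ * ε * ω ≤ a₁ * a₂ * ω :=
          mul_le_mul_of_nonneg_right
            (mul_le_mul hδa.le hεa.le hε h1.le) hω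
      _ < a₁ * a₂ * a₃ := mul_lt_mul_of_pos_left hωa (mul_pos h1 h2)
  have hDpos : 0 < D := by
    rw [hD]; nlinarith [mul_pos (mul_pos (mul_pos h1 h2) h3) hμ]
  have hρpos : 0 < ρ := by
    rw [hρ]; nlinarith [mul_pos (mul_pos (mul_pos hΛ hη) h2) h3, mul_pos hκ hd]
  have hR0 : 0 < R₀ := lt_trans one_pos hR₀gt
  have hR1 : 0 < R₀ - 1 := sub_pos.mpr hR₀gt
  refine ⟨?_, ?_, ?_, ?_, ?_, ?_, ?_⟩
  · rw [hS]; positivity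
  · rw [hI]; positivity
  · rw [hB]; positivity
  · rw [hQ]; positivity
  · rw [hR]; positivity
  · intro hδp; rw [hQ]; positivity
  · intro hδp hεp; rw [hR]; positivity
end

section
/- Let (x̄₁, x̄₂, x̄₃, x̄₄, x̄₅) ∈ (ℝ₀⁺)⁵ be an equilibrium point, λ̄ = βx̄₅/(κ + x̄₅), C = βκx̄₁/(κ + x̄₅)², and let A₀ be the 5×5 real matrix with rows (−λ̄−μ, 0, 0, ω, −C), (0, −a₁, 0, 0, 0), (0, δ, −a₂, 0, 0), (0, 0, ε, −a₃, 0), (0, η, 0, 0, −d), and A₁ the 5×5 real matrix whose only nonzero entries are (A₁)₂₁ = λ̄ and (A₁)₂₅ = C. Then for every τ ≥ 0 and every χ ∈ ℂ, det(χI₅ − A₀ − e^{−τχ}A₁) = P₁(χ) + e^{−τχ}P₂(χ). -/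
/-!
The delay matrix `A₁` has a single nonzero row, so by linearity of the determinant in that row,
`det (χ • 1 - A₀ - e • A₁) = det (χ • 1 - A₀) - e * det N`, where `N` is `χ • 1 - A₀` with its
second row replaced by that of `A₁`. The first determinant is triangular after reordering the
compartments, giving `P₁`. Expanding the second along its second row `(λ̄, 0, 0, 0, C)`, the two
`λ̄ C` terms cancel the `λ̄` of `χ + λ̄ + μ`, so that
`-P₂ = η C (χ + a₂) (χ + a₃) (χ + μ) + δ ε ω λ̄ (χ + d)`.
-/

namespace Matrix

variable {n R : Type*} [Fintype n] [DecidableEq n] [CommRing R]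

theorem det_sub_smul_of_row_ne_eq_zero (B A : Matrix n n R) (c : R) (i : n)
    (hA : ∀ j ≠ i, A j = 0) :
    (B - c • A).det = B.det - c * (B.updateRow i (A i)).det := by
  have hrow : B - c • A = B.updateRow i (B i + (-c) • A i) := by
    ext j k
    rcases eq_or_ne j i with rfl | hj
    · simp only [Matrix.sub_apply, Matrix.smul_apply, smul_eq_mul, updateRow_self, Pi.add_apply,
        Pi.smul_apply, neg_mul, sub_eq_add_neg]
    · simp only [Matrix.sub_apply, Matrix.smul_apply, hA j hj, Pi.zero_apply, smul_eq_mul,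
        mul_zero, sub_zero, updateRow_ne hj]
  rw [hrow, det_updateRow_add, det_updateRow_smul, updateRow_eq_self]
  ring

end Matrix

namespace SIQRB

variable {R : Type*} [CommRing R] (χ lam μ ω C a₁ a₂ a₃ δ ε η d : R)

def undelayedJacobian : Matrix (Fin 5) (Fin 5) R :=
  !![-lam - μ, 0, 0, ω, -C;
     0, -a₁, 0, 0, 0;
     0, δ, -a₂, 0, 0;
     0, 0, ε, -a₃, 0;
     0, η, 0, 0, -d]

def delayedJacobian : Matrix (Fin 5) (Fin 5) R :=
  !![0, 0, 0, 0, 0;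
     lam, 0, 0, 0, C;
     0, 0, 0, 0, 0;
     0, 0, 0, 0, 0;
     0, 0, 0, 0, 0]

theorem delayedJacobian_row_eq_zero {j : Fin 5} (hj : j ≠ 1) : delayedJacobian lam C j = 0 := by
  fin_cases j
  all_goals first | exact absurd rfl hj | (ext k; fin_cases k <;> rfl)

theorem det_smul_one_sub_undelayedJacobian :
    (χ • 1 - undelayedJacobian lam μ ω C a₁ a₂ a₃ δ ε η d).det =
      (χ + a₁) * (χ + a₂) * (χ + a₃) * (χ + d) * (χ + lam + μ) := by
  simp only [undelayedJacobian, Matrix.det_succ_row_zero, Matrix.sub_apply, Matrix.smul_apply,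
    Matrix.one_apply, Matrix.of_apply, Matrix.submatrix_apply, Fin.succAbove, Matrix.cons_val,
    Fin.reduceSucc, Matrix.det_unique, Fin.default_eq_zero, Fin.sum_univ_succ, Fin.coe_ofNat_eq_mod,
    ↓reduceIte, Fin.succ_pos, Fin.reduceCastSucc, Fin.reduceLT, Fin.reduceEq]
  ring

theorem det_updateRow_smul_one_sub_undelayedJacobian :
    ((χ • 1 - undelayedJacobian lam μ ω C a₁ a₂ a₃ δ ε η d).updateRow 1
        (delayedJacobian lam C 1)).det =
      η * C * (χ + a₂) * (χ + a₃) * (χ + μ) + δ * ε * ω * lam * (χ + d) := by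
  simp only [undelayedJacobian, delayedJacobian, Matrix.det_succ_row_zero, Matrix.updateRow_apply,
    ↓reduceIte, Matrix.sub_apply, Matrix.smul_apply, Matrix.one_apply, Matrix.of_apply,
    Matrix.submatrix_apply, Fin.succAbove, Fin.reduceEq, Matrix.cons_val, Fin.reduceSucc,
    Matrix.det_unique, Fin.default_eq_zero, Fin.sum_univ_succ, Fin.coe_ofNat_eq_mod,
    Fin.reduceCastSucc, Fin.reduceLT]
  ring

end SIQRB

theorem siqrb_characteristic_polynomial_general
    (μ η d ω δ ε : ℝ)
    (a₁ a₂ a₃ lam C : ℝ)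
    (P₁ P₂ : ℂ → ℂ)
    (hP₁ : ∀ χ : ℂ, P₁ χ =
      (χ + (a₁ : ℂ)) * (χ + (a₂ : ℂ)) * (χ + (a₃ : ℂ)) * (χ + (d : ℂ)) *
        (χ + (lam : ℂ) + (μ : ℂ)))
    (hP₂ : ∀ χ : ℂ, P₂ χ =
      -(η : ℂ) * (C : ℂ) * χ ^ 3 - (η : ℂ) * (C : ℂ) * ((a₂ : ℂ) + (a₃ : ℂ) + (μ : ℂ)) * χ ^ 2
        - ((η : ℂ) * (C : ℂ) * ((a₂ : ℂ) * (a₃ : ℂ) + (a₂ : ℂ) * (μ : ℂ) + (a₃ : ℂ) * (μ : ℂ))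
            + (δ : ℂ) * (ε : ℂ) * (ω : ℂ) * (lam : ℂ)) * χ
        - (η : ℂ) * (C : ℂ) * (a₂ : ℂ) * (a₃ : ℂ) * (μ : ℂ)
        - (δ : ℂ) * (ε : ℂ) * (ω : ℂ) * (d : ℂ) * (lam : ℂ))
    (A₀ A₁mat : Matrix (Fin 5) (Fin 5) ℂ)
    (hA₀ : A₀ = !![-(lam : ℂ) - (μ : ℂ), 0, 0, (ω : ℂ), -(C : ℂ);
                   0, -(a₁ : ℂ), 0, 0, 0;
                   0, (δ : ℂ), -(a₂ : ℂ), 0, 0;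
                   0, 0, (ε : ℂ), -(a₃ : ℂ), 0;
                   0, (η : ℂ), 0, 0, -(d : ℂ)])
    (hA₁ : A₁mat = !![0, 0, 0, 0, 0;
                      (lam : ℂ), 0, 0, 0, (C : ℂ);
                      0, 0, 0, 0, 0;
                      0, 0, 0, 0, 0;
                      0, 0, 0, 0, 0]) :
    ∀ (τ : ℝ), 0 ≤ τ → ∀ χ : ℂ,
      Matrix.det (χ • (1 : Matrix (Fin 5) (Fin 5) ℂ) - A₀ - Complex.exp (-(τ : ℂ) * χ) • A₁mat)
        = P₁ χ + Complex.exp (-(τ : ℂ) * χ) * P₂ χ := by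
  intro τ _ χ
  obtain rfl : A₀ = SIQRB.undelayedJacobian (lam : ℂ) μ ω C a₁ a₂ a₃ δ ε η d := hA₀
  obtain rfl : A₁mat = SIQRB.delayedJacobian (lam : ℂ) C := hA₁
  rw [Matrix.det_sub_smul_of_row_ne_eq_zero _ _ _ 1
      (fun _ ↦ SIQRB.delayedJacobian_row_eq_zero _ _),
    SIQRB.det_smul_one_sub_undelayedJacobian,
    SIQRB.det_updateRow_smul_one_sub_undelayedJacobian, hP₁, hP₂]
  ring

/-- The characteristic determinant of the linearized delayed SIQRB system splits as
`det(χI₅ − A₀ − e^{−τχ}A₁) = P₁(χ) + e^{−τχ}P₂(χ)`. -/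
theorem siqrb_characteristic_polynomial
    (Λ μ β κ η d ω δ ε α₁ α₂ : ℝ)
    (hΛ : 0 < Λ) (hμ : 0 < μ) (hβ : 0 < β) (hκ : 0 < κ) (hη : 0 < η) (hd : 0 < d)
    (hω : 0 ≤ ω) (hδ : 0 ≤ δ) (hε : 0 ≤ ε) (hα₁ : 0 ≤ α₁) (hα₂ : 0 ≤ α₂)
    (x₁ x₂ x₃ x₄ x₅ : ℝ)
    (hx₁ : 0 ≤ x₁) (hx₂ : 0 ≤ x₂) (hx₃ : 0 ≤ x₃) (hx₄ : 0 ≤ x₄) (hx₅ : 0 ≤ x₅)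
    (a₁ a₂ a₃ lam C : ℝ)
    (ha₁ : a₁ = δ + α₁ + μ) (ha₂ : a₂ = ε + α₂ + μ) (ha₃ : a₃ = ω + μ)
    (hlam : lam = β * x₅ / (κ + x₅)) (hC : C = β * κ * x₁ / (κ + x₅) ^ 2)
    (P₁ P₂ : ℂ → ℂ)
    (hP₁ : ∀ χ : ℂ, P₁ χ =
      (χ + (a₁ : ℂ)) * (χ + (a₂ : ℂ)) * (χ + (a₃ : ℂ)) * (χ + (d : ℂ)) *
        (χ + (lam : ℂ) + (μ : ℂ)))
    (hP₂ : ∀ χ : ℂ, P₂ χ =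
      -(η : ℂ) * (C : ℂ) * χ ^ 3 - (η : ℂ) * (C : ℂ) * ((a₂ : ℂ) + (a₃ : ℂ) + (μ : ℂ)) * χ ^ 2
        - ((η : ℂ) * (C : ℂ) * ((a₂ : ℂ) * (a₃ : ℂ) + (a₂ : ℂ) * (μ : ℂ) + (a₃ : ℂ) * (μ : ℂ))
            + (δ : ℂ) * (ε : ℂ) * (ω : ℂ) * (lam : ℂ)) * χ
        - (η : ℂ) * (C : ℂ) * (a₂ : ℂ) * (a₃ : ℂ) * (μ : ℂ)
        - (δ : ℂ) * (ε : ℂ) * (ω : ℂ) * (d : ℂ) * (lam : ℂ))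
    (A₀ A₁mat : Matrix (Fin 5) (Fin 5) ℂ)
    (hA₀ : A₀ = !![-(lam : ℂ) - (μ : ℂ), 0, 0, (ω : ℂ), -(C : ℂ);
                   0, -(a₁ : ℂ), 0, 0, 0;
                   0, (δ : ℂ), -(a₂ : ℂ), 0, 0;
                   0, 0, (ε : ℂ), -(a₃ : ℂ), 0;
                   0, (η : ℂ), 0, 0, -(d : ℂ)])
    (hA₁ : A₁mat = !![0, 0, 0, 0, 0;
                      (lam : ℂ), 0, 0, 0, (C : ℂ);
                      0, 0, 0, 0, 0;
                      0, 0, 0, 0, 0;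
                      0, 0, 0, 0, 0]) :
    ∀ (τ : ℝ), 0 ≤ τ → ∀ χ : ℂ,
      Matrix.det (χ • (1 : Matrix (Fin 5) (Fin 5) ℂ) - A₀ - Complex.exp (-(τ : ℂ) * χ) • A₁mat)
        = P₁ χ + Complex.exp (-(τ : ℂ) * χ) * P₂ χ :=
  siqrb_characteristic_polynomial_general μ η d ω δ ε a₁ a₂ a₃ lam C P₁ P₂ hP₁ hP₂ A₀ A₁mat hA₀ hA₁
end

section
/- If R₀ > 1 then, with C* = βκS*/(κ + B*)², one has C* = βΛ(R₀κd(a₁a₂a₃ − δεω) + Ληa₂a₃)/(μκR₀²ρ). -/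
/-! Writing `X = a₁a₂a₃ − δεω`, the definition of `R₀` says `βΛη = R₀μκda₁`, and with it both
`κ + B* = βρ/(dD)` and `R₀κdX + Ληa₂a₃ = ΛηD/(μa₁)`. Substituting these, both sides of the
formula reduce to `κd²a₁D/(βηρ)`. The denominators are nonzero because `X > 0`, as
`δ < a₁`, `ε < a₂` and `ω < a₃`. -/

namespace SIQRB

variable {K : Type*} [Field K] {Λ μ β κ η d a₁ a₂ a₃ X ρ D R₀ : K}

theorem kappa_add_Bstar (hR₀ : R₀ = β * Λ * η / (μ * κ * d * a₁))
    (hρ : ρ = Λ * η * a₂ * a₃ + κ * d * X) (hD : D = a₁ * a₂ * a₃ * μ + β * X)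
    (hΛ : Λ ≠ 0) (hμ : μ ≠ 0) (hβ : β ≠ 0) (hκ : κ ≠ 0) (hη : η ≠ 0) (hd : d ≠ 0)
    (ha₁ : a₁ ≠ 0) (hD0 : D ≠ 0) :
    κ + β * Λ * η * a₂ * a₃ * (R₀ - 1) / (R₀ * D * d) = β * ρ / (d * D) := by
  subst hR₀ hρ
  field_simp
  rw [hD]
  ring

theorem Cstar_eq (hR₀ : R₀ = β * Λ * η / (μ * κ * d * a₁))
    (hρ : ρ = Λ * η * a₂ * a₃ + κ * d * X) (hD : D = a₁ * a₂ * a₃ * μ + β * X)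
    (hΛ : Λ ≠ 0) (hμ : μ ≠ 0) (hβ : β ≠ 0) (hκ : κ ≠ 0) (hη : η ≠ 0) (hd : d ≠ 0)
    (ha₁ : a₁ ≠ 0) (hρ0 : ρ ≠ 0) (hD0 : D ≠ 0) :
    β * κ * (a₁ * ρ / (η * D)) / (κ + β * Λ * η * a₂ * a₃ * (R₀ - 1) / (R₀ * D * d)) ^ 2 =
      κ * d ^ 2 * a₁ * D / (β * η * ρ) := by
  rw [kappa_add_Bstar hR₀ hρ hD hΛ hμ hβ hκ hη hd ha₁ hD0]
  field_simp

theorem Cstar_formula_eq (hR₀ : R₀ = β * Λ * η / (μ * κ * d * a₁))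
    (hD : D = a₁ * a₂ * a₃ * μ + β * X)
    (hΛ : Λ ≠ 0) (hμ : μ ≠ 0) (hβ : β ≠ 0) (hκ : κ ≠ 0) (hη : η ≠ 0) (hd : d ≠ 0)
    (ha₁ : a₁ ≠ 0) :
    β * Λ * (R₀ * κ * d * X + Λ * η * a₂ * a₃) / (μ * κ * R₀ ^ 2 * ρ) =
      κ * d ^ 2 * a₁ * D / (β * η * ρ) := by
  subst hR₀ hD
  field_simp
  ring

end SIQRB

open SIQRB in
theorem siqrb_Cstar_formula_general
    (Λ μ β κ η d ω δ ε α₁ α₂ : ℝ)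
    (hΛ : 0 < Λ) (hμ : 0 < μ) (hβ : 0 < β) (hκ : 0 < κ) (hη : 0 < η) (hd : 0 < d)
    (hω : 0 ≤ ω) (hδ : 0 ≤ δ) (hε : 0 ≤ ε) (hα₁ : 0 ≤ α₁) (hα₂ : 0 ≤ α₂)
    (a₁ a₂ a₃ ρ D R₀ Sstar Bstar Cstar : ℝ)
    (ha₁ : a₁ = δ + α₁ + μ) (ha₂ : a₂ = ε + α₂ + μ) (ha₃ : a₃ = ω + μ)
    (hρ : ρ = Λ * η * a₂ * a₃ + κ * d * (a₁ * a₂ * a₃ - δ * ε * ω))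
    (hD : D = a₁ * a₂ * a₃ * μ + β * (a₁ * a₂ * a₃ - δ * ε * ω))
    (hR₀ : R₀ = β * Λ * η / (μ * κ * d * a₁))
    (hS : Sstar = a₁ * ρ / (η * D))
    (hB : Bstar = β * Λ * η * a₂ * a₃ * (R₀ - 1) / (R₀ * D * d))
    (hCstar : Cstar = β * κ * Sstar / (κ + Bstar) ^ 2) :
    Cstar = β * Λ * (R₀ * κ * d * (a₁ * a₂ * a₃ - δ * ε * ω) + Λ * η * a₂ * a₃) /
      (μ * κ * R₀ ^ 2 * ρ) := by
  have hδa₁ : δ < a₁ := by linarith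
  have hεa₂ : ε < a₂ := by linarith
  have hωa₃ : ω < a₃ := by linarith
  have hX : 0 < a₁ * a₂ * a₃ - δ * ε * ω :=
    sub_pos.2 (mul_lt_mul'' (mul_lt_mul'' hδa₁ hεa₂ hδ hε) hωa₃ (by positivity) hω)
  have hρ0 : 0 < ρ := by
    have : 0 < Λ * η * a₂ * a₃ := by
      have := hε.trans_lt hεa₂; have := hω.trans_lt hωa₃; positivity
    exact hρ ▸ add_pos this (mul_pos (by positivity) hX)
  have hD0 : 0 < D := by
    have : 0 < a₁ * a₂ * a₃ * μ := by
      have := hδ.trans_lt hδa₁; have := hε.trans_lt hεa₂; have := hω.trans_lt hωa₃; positivity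
    exact hD ▸ add_pos this (mul_pos hβ hX)
  rw [hCstar, hS, hB, Cstar_eq hR₀ hρ hD hΛ.ne' hμ.ne' hβ.ne' hκ.ne' hη.ne' hd.ne'
      (by linarith) hρ0.ne' hD0.ne', Cstar_formula_eq hR₀ hD hΛ.ne' hμ.ne' hβ.ne' hκ.ne' hη.ne'
      hd.ne' (by linarith)]

/-- If `R₀ > 1` then `C* = βκS*/(κ + B*)²` satisfies
`C* = βΛ(R₀κd(a₁a₂a₃ − δεω) + Ληa₂a₃)/(μκR₀²ρ)`. -/
theorem siqrb_Cstar_formula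
    (Λ μ β κ η d ω δ ε α₁ α₂ : ℝ)
    (hΛ : 0 < Λ) (hμ : 0 < μ) (hβ : 0 < β) (hκ : 0 < κ) (hη : 0 < η) (hd : 0 < d)
    (hω : 0 ≤ ω) (hδ : 0 ≤ δ) (hε : 0 ≤ ε) (hα₁ : 0 ≤ α₁) (hα₂ : 0 ≤ α₂)
    (a₁ a₂ a₃ ρ D R₀ Sstar Bstar Cstar : ℝ)
    (ha₁ : a₁ = δ + α₁ + μ) (ha₂ : a₂ = ε + α₂ + μ) (ha₃ : a₃ = ω + μ)
    (hρ : ρ = Λ * η * a₂ * a₃ + κ * d * (a₁ * a₂ * a₃ - δ * ε * ω))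
    (hD : D = a₁ * a₂ * a₃ * μ + β * (a₁ * a₂ * a₃ - δ * ε * ω))
    (hR₀ : R₀ = β * Λ * η / (μ * κ * d * a₁))
    (hR₀gt : 1 < R₀)
    (hS : Sstar = a₁ * ρ / (η * D))
    (hB : Bstar = β * Λ * η * a₂ * a₃ * (R₀ - 1) / (R₀ * D * d))
    (hCstar : Cstar = β * κ * Sstar / (κ + Bstar) ^ 2) :
    Cstar = β * Λ * (R₀ * κ * d * (a₁ * a₂ * a₃ - δ * ε * ω) + Λ * η * a₂ * a₃) /
      (μ * κ * R₀ ^ 2 * ρ) :=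
  siqrb_Cstar_formula_general Λ μ β κ η d ω δ ε α₁ α₂ hΛ hμ hβ hκ hη hd hω hδ hε hα₁ hα₂ a₁ a₂ a₃ ρ
    D R₀ Sstar Bstar Cstar ha₁ ha₂ ha₃ hρ hD hR₀ hS hB hCstar
end

section
/- If R₀ > 1 then, with C* = βκS*/(κ + B*)², one has ηC* = a₁d(1 + a₁a₂a₃μκd(1 − R₀)/(βρ)). -/
/-!
Substituting `βΛη = R₀μκda₁` (the definition of `R₀`) turns both sides into rational
functions of the parameters. The one identity behind the formula is
`κdD̄ = βρ + a₁a₂a₃μκd(1 − R₀)`, which gives `κ + B* = βρ/(dD̄)`; inserting this into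
`C* = βκS*/(κ + B*)²` yields `ηC* = a₁d · κdD̄/(βρ)`.
-/

theorem mul_mul_sub_mul_mul_pos_s12 {x₁ x₂ x₃ y₁ y₂ y₃ : ℝ}
    (hx₁ : 0 ≤ x₁) (hx₂ : 0 ≤ x₂) (hx₃ : 0 ≤ x₃)
    (h₁ : x₁ < y₁) (h₂ : x₂ < y₂) (h₃ : x₃ < y₃) :
    0 < y₁ * y₂ * y₃ - x₁ * x₂ * x₃ :=
  sub_pos.2 <| mul_lt_mul'' (mul_lt_mul'' h₁ h₂ hx₁ hx₂) h₃ (mul_nonneg hx₁ hx₂) hx₃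

section Algebra

variable {K : Type*} [Field K] {Λ μ β κ η d a₁ a₂ a₃ P ρ D R₀ : K}

theorem kappa_mul_d_mul_D_eq (hR₀ : β * Λ * η = R₀ * (μ * κ * d * a₁))
    (hρ : ρ = Λ * η * a₂ * a₃ + κ * d * P) (hD : D = a₁ * a₂ * a₃ * μ + β * P) :
    κ * d * D = β * ρ + a₁ * a₂ * a₃ * μ * κ * d * (1 - R₀) := by
  rw [hρ, hD]
  linear_combination (-(a₂ * a₃)) * hR₀

theorem kappa_add_Bstar_eq (hR₀ : β * Λ * η = R₀ * (μ * κ * d * a₁))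
    (hρ : ρ = Λ * η * a₂ * a₃ + κ * d * P) (hD : D = a₁ * a₂ * a₃ * μ + β * P)
    (hR₀ne : R₀ ≠ 0) (hDne : D ≠ 0) (hd : d ≠ 0) :
    κ + β * Λ * η * a₂ * a₃ * (R₀ - 1) / (R₀ * D * d) = β * ρ / (d * D) := by
  have hBstar : β * Λ * η * a₂ * a₃ * (R₀ - 1) / (R₀ * D * d)
      = μ * κ * a₁ * a₂ * a₃ * (R₀ - 1) / D := by
    rw [hR₀]; field_simp
  rw [hBstar, eq_div_iff (mul_ne_zero hd hDne)]
  field_simp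
  linear_combination kappa_mul_d_mul_D_eq hR₀ hρ hD

theorem eta_mul_Cstar_eq {S C : K} (hη : η ≠ 0) (hβ : β ≠ 0) (hρ : ρ ≠ 0) (hD : D ≠ 0)
    (hd : d ≠ 0) (hS : S = a₁ * ρ / (η * D)) (hC : C = β * κ * S / (β * ρ / (d * D)) ^ 2) :
    η * C = a₁ * d * (κ * d * D / (β * ρ)) := by
  rw [hC, hS]
  field_simp

end Algebra

/-- If `R₀ > 1` then `ηC* = a₁d(1 + a₁a₂a₃μκd(1 − R₀)/(βρ))`, where
`C* = βκS*/(κ + B*)²`. -/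
theorem siqrb_etaCstar_formula
    (Λ μ β κ η d ω δ ε α₁ α₂ : ℝ)
    (hΛ : 0 < Λ) (hμ : 0 < μ) (hβ : 0 < β) (hκ : 0 < κ) (hη : 0 < η) (hd : 0 < d)
    (hω : 0 ≤ ω) (hδ : 0 ≤ δ) (hε : 0 ≤ ε) (hα₁ : 0 ≤ α₁) (hα₂ : 0 ≤ α₂)
    (a₁ a₂ a₃ ρ D R₀ Sstar Bstar Cstar : ℝ)
    (ha₁ : a₁ = δ + α₁ + μ) (ha₂ : a₂ = ε + α₂ + μ) (ha₃ : a₃ = ω + μ)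
    (hρ : ρ = Λ * η * a₂ * a₃ + κ * d * (a₁ * a₂ * a₃ - δ * ε * ω))
    (hD : D = a₁ * a₂ * a₃ * μ + β * (a₁ * a₂ * a₃ - δ * ε * ω))
    (hR₀ : R₀ = β * Λ * η / (μ * κ * d * a₁))
    (hR₀gt : 1 < R₀)
    (hS : Sstar = a₁ * ρ / (η * D))
    (hB : Bstar = β * Λ * η * a₂ * a₃ * (R₀ - 1) / (R₀ * D * d))
    (hCstar : Cstar = β * κ * Sstar / (κ + Bstar) ^ 2) :
    η * Cstar = a₁ * d * (1 + a₁ * a₂ * a₃ * μ * κ * d * (1 - R₀) / (β * ρ)) := by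
  have ha₁pos : 0 < a₁ := by rw [ha₁]; positivity
  have ha₂pos : 0 < a₂ := by rw [ha₂]; positivity
  have ha₃pos : 0 < a₃ := by rw [ha₃]; positivity
  have hP : 0 < a₁ * a₂ * a₃ - δ * ε * ω :=
    mul_mul_sub_mul_mul_pos_s12 hδ hε hω (by linarith) (by linarith) (by linarith)
  have hρpos : 0 < ρ := by rw [hρ]; positivity
  have hDpos : 0 < D := by rw [hD]; positivity
  have hR₀' : β * Λ * η = R₀ * (μ * κ * d * a₁) := by
    rw [hR₀, div_mul_cancel₀]; positivity
  rw [hB, kappa_add_Bstar_eq hR₀' hρ hD (by positivity) hDpos.ne' hd.ne'] at hCstar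
  rw [eta_mul_Cstar_eq hη.ne' hβ.ne' hρpos.ne' hDpos.ne' hd.ne' hS hCstar,
    kappa_mul_d_mul_D_eq hR₀' hρ hD, add_div, div_self (by positivity)]
end

section
/- If R₀ > 1 then the force of infection at the endemic equilibrium satisfies βB*/(κ + B*) = a₁a₂a₃μκd(R₀ − 1)/ρ. -/
/-- If `R₀ > 1` then the force of infection at the endemic equilibrium satisfies
`βB*/(κ + B*) = a₁a₂a₃μκd(R₀ − 1)/ρ`. -/
theorem siqrb_force_of_infection_endemic
    (Λ μ β κ η d ω δ ε α₁ α₂ : ℝ)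
    (hΛ : 0 < Λ) (hμ : 0 < μ) (hβ : 0 < β) (hκ : 0 < κ) (hη : 0 < η) (hd : 0 < d)
    (hω : 0 ≤ ω) (hδ : 0 ≤ δ) (hε : 0 ≤ ε) (hα₁ : 0 ≤ α₁) (hα₂ : 0 ≤ α₂)
    (a₁ a₂ a₃ ρ D R₀ Bstar : ℝ)
    (ha₁ : a₁ = δ + α₁ + μ) (ha₂ : a₂ = ε + α₂ + μ) (ha₃ : a₃ = ω + μ)
    (hρ : ρ = Λ * η * a₂ * a₃ + κ * d * (a₁ * a₂ * a₃ - δ * ε * ω))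
    (hD : D = a₁ * a₂ * a₃ * μ + β * (a₁ * a₂ * a₃ - δ * ε * ω))
    (hR₀ : R₀ = β * Λ * η / (μ * κ * d * a₁))
    (hR₀gt : 1 < R₀)
    (hB : Bstar = β * Λ * η * a₂ * a₃ * (R₀ - 1) / (R₀ * D * d)) :
    β * Bstar / (κ + Bstar) = a₁ * a₂ * a₃ * μ * κ * d * (R₀ - 1) / ρ := by
  have ha₁p : 0 < a₁ := by rw [ha₁]; positivity
  have ha₂p : 0 < a₂ := by rw [ha₂]; positivity
  have ha₃p : 0 < a₃ := by rw [ha₃]; positivity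
  have hX : 0 < a₁ * a₂ * a₃ - δ * ε * ω := by
    have h1 : δ * ε * ω ≤ ((δ + α₁ + μ) * (ε + α₂ + μ)) * ω := by
      apply mul_le_mul_of_nonneg_right _ hω
      apply mul_le_mul (by linarith) (by linarith) hε (by linarith)
    have h2 : ((δ + α₁ + μ) * (ε + α₂ + μ)) * ω <
        ((δ + α₁ + μ) * (ε + α₂ + μ)) * (ω + μ) := by
      apply mul_lt_mul_of_pos_left (by linarith)
      positivity
    rw [ha₁, ha₂, ha₃]; nlinarith
  have hDp : 0 < D := by rw [hD]; positivity
  have hρp : 0 < ρ := by rw [hρ]; positivity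
  have hR₀p : 0 < R₀ := lt_trans one_pos hR₀gt
  have hR₀' : R₀ * (μ * κ * d * a₁) = β * Λ * η := by
    rw [hR₀]; field_simp
  have hR₀m1 : 0 < R₀ - 1 := by linarith
  -- division-free form of Bstar
  have hB' : Bstar * D = μ * κ * a₁ * a₂ * a₃ * (R₀ - 1) := by
    have hne : R₀ * D * d ≠ 0 := by positivity
    have h := hB
    rw [eq_div_iff hne] at h
    have hRd : (R₀ * d : ℝ) ≠ 0 := by positivity
    apply mul_left_cancel₀ hRd
    linear_combination h - a₂ * a₃ * (R₀ - 1) * hR₀'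
  have hBpos : 0 < Bstar := by
    have := hB'
    nlinarith [mul_pos (mul_pos (mul_pos (mul_pos (mul_pos hμ hκ) ha₁p) ha₂p) ha₃p) hR₀m1]
  have hden : 0 < κ + Bstar := by linarith
  rw [div_eq_div_iff hden.ne' hρp.ne']
  subst hρ hD
  linear_combination d * κ * hB' - Bstar * a₂ * a₃ * hR₀'
end

section
/- Let R₀ > 1 and evaluate P₁ and P₂ at the endemic equilibrium, i.e. with λ̄ = βB*/(κ + B*) and C = C* = βκS*/(κ + B*)². Then P₁(0) + P₂(0) = −(μda₁a₂a₃/(R₀ρ))·(1 − R₀)·(R₀κd(a₁a₂a₃ − δεω) + Ληa₂a₃); in particular, since R₀ > 1, P₁(0) + P₂(0) > 0, and P₁(0) + P₂(0) = 0 would hold only if R₀ = 1. -/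
/-!
Write `X = a₁a₂a₃ − δεω`, so that `ρ = Ληa₂a₃ + κdX` and `D̄ = a₁a₂a₃μ + βX`, and use
`βΛη = R₀μκda₁`. Then `B* = μκa₁a₂a₃(R₀ − 1)/D̄` and `κ + B* = βρ/(dD̄)`, which gives the closed forms
`λ̄ = μκda₁a₂a₃(R₀ − 1)/ρ` and `ηC* = κa₁d²D̄/(βρ)`. Since `P₁(0) + P₂(0) = a₁a₂a₃dμ + dXλ̄ − ηC*a₂a₃μ`,
substituting these is a rational identity. Its sign is that of `R₀ − 1` because `X ≥ 0`.
-/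

section SIQRB

variable {Λ μ β κ η d a₁ a₂ a₃ X R₀ ρ D B : ℝ}

theorem siqrb_bstar_eq (hR : β * Λ * η = R₀ * (μ * κ * d * a₁)) (hR₀ : R₀ ≠ 0) (hd : d ≠ 0) :
    β * Λ * η * a₂ * a₃ * (R₀ - 1) / (R₀ * D * d) = μ * κ * a₁ * a₂ * a₃ * (R₀ - 1) / D := by
  rw [hR]
  field_simp

theorem siqrb_kappa_add_bstar_eq (hR : β * Λ * η = R₀ * (μ * κ * d * a₁))
    (hρ : ρ = Λ * η * a₂ * a₃ + κ * d * X) (hD : D = a₁ * a₂ * a₃ * μ + β * X)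
    (hd : d ≠ 0) (hD₀ : D ≠ 0) :
    κ + μ * κ * a₁ * a₂ * a₃ * (R₀ - 1) / D = β * ρ / (d * D) := by
  rw [eq_div_iff (mul_ne_zero hd hD₀)]
  field_simp
  rw [hρ, hD]
  linear_combination (-(a₂ * a₃)) * hR

theorem siqrb_lam_eq (hκB : κ + B = β * ρ / (d * D))
    (hB : B = μ * κ * a₁ * a₂ * a₃ * (R₀ - 1) / D) (hβ : β ≠ 0) (hD₀ : D ≠ 0) :
    β * B / (κ + B) = μ * κ * d * a₁ * a₂ * a₃ * (R₀ - 1) / ρ := by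
  rw [hκB, hB]
  field_simp

theorem siqrb_eta_mul_cstar_eq (hκB : κ + B = β * ρ / (d * D))
    (hβ : β ≠ 0) (hη : η ≠ 0) (hρ₀ : ρ ≠ 0) (hD₀ : D ≠ 0) :
    η * (β * κ * (a₁ * ρ / (η * D)) / (κ + B) ^ 2) = κ * a₁ * d ^ 2 * D / (β * ρ) := by
  rw [hκB]
  field_simp

theorem siqrb_charpoly_zero_sum_eq (hR : β * Λ * η = R₀ * (μ * κ * d * a₁))
    (hρ : ρ = Λ * η * a₂ * a₃ + κ * d * X) (hD : D = a₁ * a₂ * a₃ * μ + β * X)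
    (hβ : β ≠ 0) (hR₀ : R₀ ≠ 0) (hρ₀ : ρ ≠ 0) :
    a₁ * a₂ * a₃ * d * μ + d * X * (μ * κ * d * a₁ * a₂ * a₃ * (R₀ - 1) / ρ)
        - κ * a₁ * d ^ 2 * D / (β * ρ) * a₂ * a₃ * μ =
      -(μ * d * a₁ * a₂ * a₃ / (R₀ * ρ)) * (1 - R₀) * (R₀ * κ * d * X + Λ * η * a₂ * a₃) := by
  field_simp
  rw [hD]
  nth_rewrite 1 [hρ]
  linear_combination (μ * d * a₁ * a₂ ^ 2 * a₃ ^ 2) * hR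

end SIQRB

/-- At the endemic equilibrium (with `λ̄ = βB*/(κ+B*)` and `C = C* = βκS*/(κ+B*)²`),
`P₁(0) + P₂(0) = −(μda₁a₂a₃/(R₀ρ))(1−R₀)(R₀κd(a₁a₂a₃−δεω) + Ληa₂a₃)`; in particular,
since `R₀ > 1`, `P₁(0) + P₂(0) > 0`, and it could vanish only if `R₀ = 1`. -/
theorem siqrb_endemic_condition_iii
    (Λ μ β κ η d ω δ ε α₁ α₂ : ℝ)
    (hΛ : 0 < Λ) (hμ : 0 < μ) (hβ : 0 < β) (hκ : 0 < κ) (hη : 0 < η) (hd : 0 < d)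
    (hω : 0 ≤ ω) (hδ : 0 ≤ δ) (hε : 0 ≤ ε) (hα₁ : 0 ≤ α₁) (hα₂ : 0 ≤ α₂)
    (a₁ a₂ a₃ ρ D R₀ Sstar Bstar lam Cstar P₁0 P₂0 : ℝ)
    (ha₁ : a₁ = δ + α₁ + μ) (ha₂ : a₂ = ε + α₂ + μ) (ha₃ : a₃ = ω + μ)
    (hρ : ρ = Λ * η * a₂ * a₃ + κ * d * (a₁ * a₂ * a₃ - δ * ε * ω))
    (hD : D = a₁ * a₂ * a₃ * μ + β * (a₁ * a₂ * a₃ - δ * ε * ω))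
    (hR₀ : R₀ = β * Λ * η / (μ * κ * d * a₁))
    (hR₀gt : 1 < R₀)
    (hS : Sstar = a₁ * ρ / (η * D))
    (hB : Bstar = β * Λ * η * a₂ * a₃ * (R₀ - 1) / (R₀ * D * d))
    (hlam : lam = β * Bstar / (κ + Bstar))
    (hCstar : Cstar = β * κ * Sstar / (κ + Bstar) ^ 2)
    (hP₁0 : P₁0 = a₁ * a₂ * a₃ * d * (lam + μ))
    (hP₂0 : P₂0 = -(η * Cstar * a₂ * a₃ * μ) - δ * ε * ω * d * lam) :
    P₁0 + P₂0 = -(μ * d * a₁ * a₂ * a₃ / (R₀ * ρ)) * (1 - R₀) *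
        (R₀ * κ * d * (a₁ * a₂ * a₃ - δ * ε * ω) + Λ * η * a₂ * a₃) ∧
      0 < P₁0 + P₂0 ∧ (P₁0 + P₂0 = 0 → R₀ = 1) := by
  have ha₁pos : 0 < a₁ := by rw [ha₁]; positivity
  have ha₂pos : 0 < a₂ := by rw [ha₂]; positivity
  have ha₃pos : 0 < a₃ := by rw [ha₃]; positivity
  have hX : 0 ≤ a₁ * a₂ * a₃ - δ * ε * ω := by
    refine sub_nonneg.2 (mul_le_mul (mul_le_mul ?_ ?_ hε ha₁pos.le) ?_ hω (by positivity)) <;>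
      linarith
  have hρpos : 0 < ρ := hρ ▸ add_pos_of_pos_of_nonneg (by positivity) (by positivity)
  have hDpos : 0 < D := hD ▸ add_pos_of_pos_of_nonneg (by positivity) (by positivity)
  have hR₀pos : 0 < R₀ := one_pos.trans hR₀gt
  have hR : β * Λ * η = R₀ * (μ * κ * d * a₁) := by rw [hR₀]; field_simp
  have hBstar := hB.trans (siqrb_bstar_eq hR hR₀pos.ne' hd.ne')
  have hκB := hBstar ▸ siqrb_kappa_add_bstar_eq hR hρ hD hd.ne' hDpos.ne'
  have hlam' := hlam.trans (siqrb_lam_eq hκB hBstar hβ.ne' hDpos.ne')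
  have hηC : η * Cstar = κ * a₁ * d ^ 2 * D / (β * ρ) := by
    rw [hCstar, hS]
    exact siqrb_eta_mul_cstar_eq hκB hβ.ne' hη.ne' hρpos.ne' hDpos.ne'
  have key : P₁0 + P₂0 = -(μ * d * a₁ * a₂ * a₃ / (R₀ * ρ)) * (1 - R₀) *
      (R₀ * κ * d * (a₁ * a₂ * a₃ - δ * ε * ω) + Λ * η * a₂ * a₃) := by
    rw [← siqrb_charpoly_zero_sum_eq hR hρ hD hβ.ne' hR₀pos.ne' hρpos.ne', ← hlam', ← hηC,
      hP₁0, hP₂0]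
    ring
  have hpos : 0 < P₁0 + P₂0 := by
    rw [key, neg_mul, ← mul_neg, neg_sub]
    exact mul_pos (mul_pos (by positivity) (sub_pos.2 hR₀gt))
      (add_pos_of_nonneg_of_pos (by positivity) (by positivity))
  exact ⟨key, hpos, fun h => absurd h hpos.ne'⟩
end

section
/- Assume R₀ > 1. Then the coefficients of the polynomial F_end(y) = c₀ + c₂y² + c₄y⁴ + c₆y⁶ + c₈y⁸ + c₁₀y¹⁰ satisfy c₄ ≥ 0, c₆ > 0, c₈ > 0 and c₁₀ = 1, where, with A = a₁a₂a₃, Ã = a₁a₂a₃ − δεω and λ* = a₁a₂a₃μκd(R₀−1)/ρ: c₄ = ((a₁d)²a₂a₃μκ(R₀−1)/(βρ))·( a₁d(a₂² + a₃² + μ²)(βρ + βκdÃ + Aμκd)/(βρ) + 2a₁μdβ + 2κdδεω(Aμ + βÃ)/ρ ) + (a₂a₃)²(a₁² + d²) + (a₁dλ*)² + ((a₁a₂)² + (a₁a₃)² + (a₂a₃)² + (a₂d)² + (a₃d)²)(λ* + μ)²; c₆ = (a₁d)³a₂a₃μκ(R₀−1)(βρ + βκdÃ + Aμκd)/(βρ)²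 + a₂²(a₁² + d²) + a₃²(a₁² + a₂² + d²) + (λ* + μ)²(a₁² + a₂² + a₃² + d²); c₈ = a₁² + a₂² + a₃² + d² + (λ* + μ)²; c₁₀ = 1. -/
/-- If `R₀ > 1`, the coefficients of `F_end(y) = c₀ + c₂y² + c₄y⁴ + c₆y⁶ + c₈y⁸ + c₁₀y¹⁰`
satisfy `c₄ ≥ 0`, `c₆ > 0`, `c₈ > 0` and `c₁₀ = 1`. -/
theorem siqrb_Fend_coefficients_nonneg
    (Λ μ β κ η d ω δ ε α₁ α₂ : ℝ)
    (hΛ : 0 < Λ) (hμ : 0 < μ) (hβ : 0 < β) (hκ : 0 < κ) (hη : 0 < η) (hd : 0 < d)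
    (hω : 0 ≤ ω) (hδ : 0 ≤ δ) (hε : 0 ≤ ε) (hα₁ : 0 ≤ α₁) (hα₂ : 0 ≤ α₂)
    (a₁ a₂ a₃ ρ R₀ A Atilde lamStar c₄ c₆ c₈ c₁₀ : ℝ)
    (ha₁ : a₁ = δ + α₁ + μ) (ha₂ : a₂ = ε + α₂ + μ) (ha₃ : a₃ = ω + μ)
    (hρ : ρ = Λ * η * a₂ * a₃ + κ * d * (a₁ * a₂ * a₃ - δ * ε * ω))
    (hR₀ : R₀ = β * Λ * η / (μ * κ * d * a₁))
    (hR₀gt : 1 < R₀)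
    (hA : A = a₁ * a₂ * a₃)
    (hAtilde : Atilde = a₁ * a₂ * a₃ - δ * ε * ω)
    (hlamStar : lamStar = a₁ * a₂ * a₃ * μ * κ * d * (R₀ - 1) / ρ)
    (hc₄ : c₄ = ((a₁ * d) ^ 2 * a₂ * a₃ * μ * κ * (R₀ - 1) / (β * ρ)) *
          (a₁ * d * (a₂ ^ 2 + a₃ ^ 2 + μ ^ 2) / (β * ρ) *
              (β * ρ + β * κ * d * Atilde + A * μ * κ * d)
            + 2 * a₁ * μ * d * β
            + 2 * κ * d * δ * ε * ω * (A * μ + β * Atilde) / ρ)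
        + (a₂ * a₃) ^ 2 * (a₁ ^ 2 + d ^ 2) + (a₁ * d * lamStar) ^ 2
        + ((a₁ * a₂) ^ 2 + (a₁ * a₃) ^ 2 + (a₂ * a₃) ^ 2 + (a₂ * d) ^ 2 + (a₃ * d) ^ 2) *
            (lamStar + μ) ^ 2)
    (hc₆ : c₆ = (a₁ * d) ^ 3 * a₂ * a₃ * μ * κ * (R₀ - 1) *
          (β * ρ + β * κ * d * Atilde + A * μ * κ * d) / (β * ρ) ^ 2
        + a₂ ^ 2 * (a₁ ^ 2 + d ^ 2) + a₃ ^ 2 * (a₁ ^ 2 + a₂ ^ 2 + d ^ 2)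
        + (lamStar + μ) ^ 2 * (a₁ ^ 2 + a₂ ^ 2 + a₃ ^ 2 + d ^ 2))
    (hc₈ : c₈ = a₁ ^ 2 + a₂ ^ 2 + a₃ ^ 2 + d ^ 2 + (lamStar + μ) ^ 2)
    (hc₁₀ : c₁₀ = 1) :
    0 ≤ c₄ ∧ 0 < c₆ ∧ 0 < c₈ ∧ c₁₀ = 1 := by
  have ha1 : 0 < a₁ := by rw [ha₁]; linarith
  have ha2 : 0 < a₂ := by rw [ha₂]; linarith
  have ha3 : 0 < a₃ := by rw [ha₃]; linarith
  have hb1 : δ ≤ a₁ := by rw [ha₁]; linarith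
  have hb2 : ε ≤ a₂ := by rw [ha₂]; linarith
  have hb3 : ω ≤ a₃ := by rw [ha₃]; linarith
  have hmul : δ * ε * ω ≤ a₁ * a₂ * a₃ :=
    mul_le_mul (mul_le_mul hb1 hb2 hε ha1.le) hb3 hω (mul_nonneg ha1.le ha2.le)
  have hAt : 0 ≤ Atilde := by rw [hAtilde]; linarith
  have hApos : 0 < A := by rw [hA]; positivity
  have hρpos : 0 < ρ := by
    rw [hρ, ← hAtilde]
    have h1 : 0 < Λ * η * a₂ * a₃ := by positivity
    have h2 : 0 ≤ κ * d * Atilde := by positivity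
    linarith
  have hr : 0 < R₀ - 1 := by linarith
  have hβρ : 0 < β * ρ := by positivity
  have hS : 0 ≤ β * ρ + β * κ * d * Atilde + A * μ * κ * d := by positivity
  have hS2 : 0 ≤ A * μ + β * Atilde := by positivity
  refine ⟨?_, ?_, ?_, hc₁₀⟩
  · rw [hc₄]
    have hX : 0 ≤ (a₁ * d) ^ 2 * a₂ * a₃ * μ * κ * (R₀ - 1) / (β * ρ) := by positivity
    have hYa : 0 ≤ a₁ * d * (a₂ ^ 2 + a₃ ^ 2 + μ ^ 2) / (β * ρ) *
        (β * ρ + β * κ * d * Atilde + A * μ * κ * d) := by positivity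
    have hYb : 0 ≤ 2 * a₁ * μ * d * β := by positivity
    have hYc : 0 ≤ 2 * κ * d * δ * ε * ω * (A * μ + β * Atilde) / ρ := by positivity
    have hT1 : 0 ≤ ((a₁ * d) ^ 2 * a₂ * a₃ * μ * κ * (R₀ - 1) / (β * ρ)) *
          (a₁ * d * (a₂ ^ 2 + a₃ ^ 2 + μ ^ 2) / (β * ρ) *
              (β * ρ + β * κ * d * Atilde + A * μ * κ * d)
            + 2 * a₁ * μ * d * β
            + 2 * κ * d * δ * ε * ω * (A * μ + β * Atilde) / ρ) :=
      mul_nonneg hX (by linarith)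
    have hT2 : 0 ≤ (a₂ * a₃) ^ 2 * (a₁ ^ 2 + d ^ 2) := by positivity
    have hT3 : 0 ≤ (a₁ * d * lamStar) ^ 2 := by positivity
    have hT4 : 0 ≤ ((a₁ * a₂) ^ 2 + (a₁ * a₃) ^ 2 + (a₂ * a₃) ^ 2 + (a₂ * d) ^ 2 +
        (a₃ * d) ^ 2) * (lamStar + μ) ^ 2 := by positivity
    linarith
  · rw [hc₆]
    have hT1 : 0 ≤ (a₁ * d) ^ 3 * a₂ * a₃ * μ * κ * (R₀ - 1) *
        (β * ρ + β * κ * d * Atilde + A * μ * κ * d) / (β * ρ) ^ 2 := by positivity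
    have hT2 : 0 < a₂ ^ 2 * (a₁ ^ 2 + d ^ 2) := by positivity
    have hT3 : 0 < a₃ ^ 2 * (a₁ ^ 2 + a₂ ^ 2 + d ^ 2) := by positivity
    have hT4 : 0 ≤ (lamStar + μ) ^ 2 * (a₁ ^ 2 + a₂ ^ 2 + a₃ ^ 2 + d ^ 2) := by positivity
    linarith
  · rw [hc₈]
    have h1 : 0 < a₁ ^ 2 := by positivity
    have h2 : 0 < a₂ ^ 2 := by positivity
    have h3 : 0 < a₃ ^ 2 := by positivity
    have h4 : 0 < d ^ 2 := by positivity
    have h5 : 0 ≤ (lamStar + μ) ^ 2 := sq_nonneg _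
    linarith
end
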